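/- For every a ∈ [0,1), every x in the open unit ball B ⊂ ℝ^n (n ≥ 2) and every y ∈ ℝ^n, one has F_a^*(x, −y) ≤ ((1+a)/(1−a)) F_a^*(x, y). -/

import Mathlib

open Metric

/-- The polar transform (co-metric) of the Funk-type metric `F_a`. -/
noncomputable def FaStar (n : ℕ) (a : ℝ) (x y : EuclideanSpace ℝ (Fin n)) : ℝ :=
  (Real.sqrt ((1 - ‖x‖ ^ 2) * (1 - a ^ 2 * ‖x‖ ^ 2) * ‖y‖ ^ 2 -
      (1 - a ^ 2) * (1 - ‖x‖ ^ 2) * (inner ℝ x y : ℝ) ^ 2) -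
    a * (1 - ‖x‖ ^ 2) * (inner ℝ x y : ℝ)) / (1 - a ^ 2 * ‖x‖ ^ 2)

/-!
Write `F_a^*(x, ±y) = (S ∓ T) / D` with `T = a (1 - |x|²) ⟨x, y⟩`; the radicand `S²` is even
in `y`. The claimed bound is equivalent to `T ≤ a S`, i.e. to `(1 - |x|²) ⟨x, y⟩ ≤ S`, and by
Cauchy–Schwarz `S² - ((1 - |x|²) ⟨x, y⟩)²` is at least `(1 - |x|²)³ |y|² ≥ 0`.
-/

theorem div_add_le_mul_div_sub {s t a D : ℝ} (hD : 0 < D) (ha : a < 1) (ht : t ≤ a * s) :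
    (s + t) / D ≤ (1 + a) / (1 - a) * ((s - t) / D) := by
  have h1a : 0 < 1 - a := by linarith
  rw [div_mul_div_comm, div_le_div_iff₀ hD (mul_pos h1a hD)]
  nlinarith [mul_le_mul_of_nonneg_right ht hD.le]

section InnerProductSpace

variable {E : Type*} [NormedAddCommGroup E] [InnerProductSpace ℝ E]

theorem real_inner_sq_le_norm_sq_mul_norm_sq (x y : E) : inner ℝ x y ^ 2 ≤ ‖x‖ ^ 2 * ‖y‖ ^ 2 := by
  rw [← sq_abs, ← mul_pow]
  exact pow_le_pow_left₀ (abs_nonneg _) (abs_real_inner_le_norm x y) 2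

theorem one_sub_norm_sq_mul_inner_le_sqrt {a : ℝ} (ha : a ^ 2 ≤ 1) {x : E} (hx : ‖x‖ ≤ 1)
    (y : E) :
    (1 - ‖x‖ ^ 2) * inner ℝ x y ≤ √((1 - ‖x‖ ^ 2) * (1 - a ^ 2 * ‖x‖ ^ 2) * ‖y‖ ^ 2 -
      (1 - a ^ 2) * (1 - ‖x‖ ^ 2) * inner ℝ x y ^ 2) := by
  apply Real.le_sqrt_of_sq_le
  have hr : ‖x‖ ^ 2 ≤ 1 := pow_le_one₀ (norm_nonneg x) hx
  have hCS := real_inner_sq_le_norm_sq_mul_norm_sq x y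
  have hbracket : (2 - ‖x‖ ^ 2 - a ^ 2) * inner ℝ x y ^ 2 ≤ (1 - a ^ 2 * ‖x‖ ^ 2) * ‖y‖ ^ 2 := by
    nlinarith [mul_le_mul_of_nonneg_left hCS (by linarith : (0 : ℝ) ≤ 2 - ‖x‖ ^ 2 - a ^ 2),
      mul_nonneg (sq_nonneg (1 - ‖x‖ ^ 2)) (sq_nonneg ‖y‖)]
  nlinarith [mul_le_mul_of_nonneg_left hbracket (by linarith : (0 : ℝ) ≤ 1 - ‖x‖ ^ 2)]

end InnerProductSpace

theorem FaStar_neg (n : ℕ) (a : ℝ) (x y : EuclideanSpace ℝ (Fin n)) :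
    FaStar n a x (-y) =
      (√((1 - ‖x‖ ^ 2) * (1 - a ^ 2 * ‖x‖ ^ 2) * ‖y‖ ^ 2 -
          (1 - a ^ 2) * (1 - ‖x‖ ^ 2) * inner ℝ x y ^ 2) +
        a * (1 - ‖x‖ ^ 2) * inner ℝ x y) / (1 - a ^ 2 * ‖x‖ ^ 2) := by
  rw [FaStar, norm_neg, inner_neg_right, neg_sq, mul_neg, sub_neg_eq_add]

theorem stmt_12_general (n : ℕ) (a : ℝ) (ha : a ∈ Set.Ico (0 : ℝ) 1)
    (x : EuclideanSpace ℝ (Fin n)) (hx : x ∈ ball (0 : EuclideanSpace ℝ (Fin n)) 1)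
    (y : EuclideanSpace ℝ (Fin n)) :
    FaStar n a x (-y) ≤ ((1 + a) / (1 - a)) * FaStar n a x y := by
  obtain ⟨ha0, ha1⟩ := ha
  have hx1 : ‖x‖ < 1 := by simpa using hx
  have ha2 : a ^ 2 ≤ 1 := pow_le_one₀ ha0 ha1.le
  have hD : 0 < 1 - a ^ 2 * ‖x‖ ^ 2 := by
    nlinarith [pow_lt_one₀ (norm_nonneg x) hx1 two_ne_zero]
  rw [FaStar_neg, FaStar]
  refine div_add_le_mul_div_sub hD ha1 ?_
  rw [mul_assoc]
  exact mul_le_mul_of_nonneg_left (one_sub_norm_sq_mul_inner_le_sqrt ha2 hx1.le y) ha0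

theorem stmt_12 (n : ℕ) (hn : 2 ≤ n) (a : ℝ) (ha : a ∈ Set.Ico (0 : ℝ) 1)
    (x : EuclideanSpace ℝ (Fin n)) (hx : x ∈ ball (0 : EuclideanSpace ℝ (Fin n)) 1)
    (y : EuclideanSpace ℝ (Fin n)) :
    FaStar n a x (-y) ≤ ((1 + a) / (1 - a)) * FaStar n a x y :=
  stmt_12_general n a ha x hx y
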